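/- For a partition λ of n, the number of standard Young tableaux of shape λ having descents at positions i and j, for 1 ≤ j < i−1 < n−1, is independent of the choice of i and j (subject to |i−j| > 1). -/
import Mathlib

open Finset

/-- A standard Young tableau of shape `μ`: a bijective filling of the cells of `μ`
with the numbers `1, ..., μ.card`, strictly increasing along rows and columns. -/
structure SYT (μ : YoungDiagram) where
  entry : ℕ → ℕ → ℕ
  row_strict : ∀ ⦃i j1 j2 : ℕ⦄, j1 < j2 → (i, j2) ∈ μ → entry i j1 < entry i j2
  col_strict : ∀ ⦃i1 i2 j : ℕ⦄, i1 < i2 → (i2, j) ∈ μ → entry i1 j < entry i2 j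
  zeros : ∀ ⦃i j : ℕ⦄, (i, j) ∉ μ → entry i j = 0
  bijOn : Set.BijOn (fun c : ℕ × ℕ => entry c.1 c.2) (μ.cells : Set (ℕ × ℕ))
    (Set.Icc 1 μ.card)

/-- `T` has a descent at `i` iff the entry `i+1` lies in a strictly lower row than `i`. -/
def SYT.DescentAt {μ : YoungDiagram} (T : SYT μ) (i : ℕ) : Prop :=
  ∀ c d : ℕ × ℕ, c ∈ μ → d ∈ μ →
    T.entry c.1 c.2 = i → T.entry d.1 d.2 = i + 1 → c.1 < d.1

lemma SYT.mem_of_icc {μ : YoungDiagram} {v : ℕ} (h1 : 1 ≤ v) (h2 : v ≤ μ.card) :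
    v ∈ Set.Icc 1 μ.card := Set.mem_Icc.2 ⟨h1, h2⟩

namespace SYT

variable {μ : YoungDiagram} (T : SYT μ)

theorem ext' {T S : SYT μ} (h : T.entry = S.entry) : T = S := by
  cases T; cases S; simpa using h

lemma entry_mem {c : ℕ × ℕ} (hc : c ∈ μ) : T.entry c.1 c.2 ∈ Set.Icc 1 μ.card :=
  T.bijOn.mapsTo (by simpa [YoungDiagram.mem_cells] using hc)

noncomputable def pos (v : ℕ) : ℕ × ℕ :=
  if h : v ∈ Set.Icc 1 μ.card then (T.bijOn.surjOn h).choose else (0, 0)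

lemma pos_mem {v : ℕ} (h : v ∈ Set.Icc 1 μ.card) : T.pos v ∈ μ := by
  rw [pos, dif_pos h]
  have := (T.bijOn.surjOn h).choose_spec.1
  simpa [YoungDiagram.mem_cells] using this

lemma entry_pos {v : ℕ} (h : v ∈ Set.Icc 1 μ.card) :
    T.entry (T.pos v).1 (T.pos v).2 = v := by
  rw [pos, dif_pos h]
  exact (T.bijOn.surjOn h).choose_spec.2

lemma pos_eq {c : ℕ × ℕ} {v : ℕ} (hc : c ∈ μ) (he : T.entry c.1 c.2 = v) :
    T.pos v = c := by
  have hv : v ∈ Set.Icc 1 μ.card := he ▸ T.entry_mem hc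
  exact T.bijOn.injOn (by simpa [YoungDiagram.mem_cells] using T.pos_mem hv)
    (by simpa [YoungDiagram.mem_cells] using hc) (by rw [T.entry_pos hv, he])

/-- trichotomy in a row -/
lemma col_lt_col {c d : ℕ × ℕ} (hc : c ∈ μ) (hd : d ∈ μ) (hrow : c.1 = d.1)
    (he : T.entry c.1 c.2 < T.entry d.1 d.2) : c.2 < d.2 := by
  obtain ⟨c1, c2⟩ := c; obtain ⟨d1, d2⟩ := d
  simp only at hrow he ⊢
  subst hrow
  rcases lt_trichotomy c2 d2 with h | h | h
  · exact h
  · subst h; omega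
  · exfalso; have := T.row_strict h hc; omega

lemma row_lt_row {c d : ℕ × ℕ} (hc : c ∈ μ) (hd : d ∈ μ) (hcol : c.2 = d.2)
    (he : T.entry c.1 c.2 < T.entry d.1 d.2) : c.1 < d.1 := by
  obtain ⟨c1, c2⟩ := c; obtain ⟨d1, d2⟩ := d
  simp only at hcol he ⊢
  subst hcol
  rcases lt_trichotomy c1 d1 with h | h | h
  · exact h
  · subst h; omega
  · exfalso; have := T.col_strict h hc; omega

/-- consecutive entries in the same row are in adjacent cells -/
lemma gap_row {c d : ℕ × ℕ} {v : ℕ} (hc : c ∈ μ) (hd : d ∈ μ) (hrow : c.1 = d.1)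
    (he : T.entry c.1 c.2 = v) (he' : T.entry d.1 d.2 = v + 1) : d.2 = c.2 + 1 := by
  have hlt : c.2 < d.2 := T.col_lt_col hc hd hrow (by omega)
  obtain ⟨c1, c2⟩ := c; obtain ⟨d1, d2⟩ := d
  simp only at hrow he he' hlt ⊢
  subst hrow
  by_contra hne
  have hmid : (c1, c2 + 1) ∈ μ := μ.up_left_mem le_rfl (by omega) hd
  have h1 : T.entry c1 c2 < T.entry c1 (c2 + 1) := T.row_strict (by omega) hmid
  have h2 : T.entry c1 (c2 + 1) < T.entry c1 d2 := T.row_strict (by omega) hd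
  omega

/-- consecutive entries in the same column are in adjacent cells -/
lemma gap_col {c d : ℕ × ℕ} {v : ℕ} (hc : c ∈ μ) (hd : d ∈ μ) (hcol : c.2 = d.2)
    (he : T.entry c.1 c.2 = v) (he' : T.entry d.1 d.2 = v + 1) : d.1 = c.1 + 1 := by
  have hlt : c.1 < d.1 := T.row_lt_row hc hd hcol (by omega)
  obtain ⟨c1, c2⟩ := c; obtain ⟨d1, d2⟩ := d
  simp only at hcol he he' hlt ⊢
  subst hcol
  by_contra hne
  have hmid : (c1 + 1, c2) ∈ μ := μ.up_left_mem (by omega) le_rfl hd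
  have h1 : T.entry c1 c2 < T.entry (c1 + 1) c2 := T.col_strict (by omega) hmid
  have h2 : T.entry (c1 + 1) c2 < T.entry d1 c2 := T.col_strict (by omega) hd
  omega

/-- if `v+1` is not in a lower row than `v`, it is in a later column -/
lemma claimA {c d : ℕ × ℕ} {v : ℕ} (hc : c ∈ μ) (hd : d ∈ μ)
    (he : T.entry c.1 c.2 = v) (he' : T.entry d.1 d.2 = v + 1)
    (hrow : d.1 ≤ c.1) : c.2 < d.2 := by
  obtain ⟨c1, c2⟩ := c; obtain ⟨d1, d2⟩ := d
  simp only at he he' hrow ⊢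
  by_contra hcol
  push_neg at hcol
  rcases eq_or_lt_of_le hrow with h | h
  · subst h
    rcases eq_or_lt_of_le hcol with h2 | h2
    · subst h2; omega
    · have := T.row_strict h2 hc; omega
  · have hx : (d1, c2) ∈ μ := μ.up_left_mem (le_of_lt h) le_rfl hc
    have h1 : T.entry d1 c2 < T.entry c1 c2 := T.col_strict h hc
    rcases eq_or_lt_of_le hcol with h2 | h2
    · subst h2; omega
    · have h3 : T.entry d1 d2 < T.entry d1 c2 := T.row_strict h2 hx
      omega

/-- if `v+1` is in a lower row than `v`, it is in a weakly earlier column -/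
lemma claimB {c d : ℕ × ℕ} {v : ℕ} (hc : c ∈ μ) (hd : d ∈ μ)
    (he : T.entry c.1 c.2 = v) (he' : T.entry d.1 d.2 = v + 1)
    (hrow : c.1 < d.1) : d.2 ≤ c.2 := by
  obtain ⟨c1, c2⟩ := c; obtain ⟨d1, d2⟩ := d
  simp only at he he' hrow ⊢
  by_contra hcol
  push_neg at hcol
  have hx : (c1, d2) ∈ μ := μ.up_left_mem (le_of_lt hrow) le_rfl hd
  have h1 : T.entry c1 c2 < T.entry c1 d2 := T.row_strict hcol hx
  have h2 : T.entry c1 d2 < T.entry d1 d2 := T.col_strict hrow hd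
  omega

lemma descent_iff {k : ℕ} (h1 : 1 ≤ k) (h2 : k + 1 ≤ μ.card) :
    T.DescentAt k ↔ (T.pos k).1 < (T.pos (k + 1)).1 := by
  have hk : k ∈ Set.Icc 1 μ.card := mem_of_icc h1 (by omega)
  have hk1 : k + 1 ∈ Set.Icc 1 μ.card := mem_of_icc (by omega) h2
  constructor
  · intro h
    exact h _ _ (T.pos_mem hk) (T.pos_mem hk1) (T.entry_pos hk) (T.entry_pos hk1)
  · intro h c d hc hd hec hed
    rwa [← T.pos_eq hc hec, ← T.pos_eq hd hed]

lemma not_descent_iff {k : ℕ} (h1 : 1 ≤ k) (h2 : k + 1 ≤ μ.card) :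
    ¬ T.DescentAt k ↔ (T.pos k).2 < (T.pos (k + 1)).2 := by
  have hk : k ∈ Set.Icc 1 μ.card := mem_of_icc h1 (by omega)
  have hk1 : k + 1 ∈ Set.Icc 1 μ.card := mem_of_icc (by omega) h2
  rw [T.descent_iff h1 h2]
  constructor
  · intro h
    push_neg at h
    exact T.claimA (T.pos_mem hk) (T.pos_mem hk1) (T.entry_pos hk) (T.entry_pos hk1) h
  · intro h hlt
    have := T.claimB (T.pos_mem hk) (T.pos_mem hk1) (T.entry_pos hk) (T.entry_pos hk1) hlt
    omega

end SYT
section Perms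

/-- the 3-cycle `k ↦ k+1 ↦ k+2 ↦ k` -/
def cyc (k : ℕ) : Equiv.Perm ℕ := (Equiv.swap (k+1) (k+2)).trans (Equiv.swap k (k+1))

/-- the 3-cycle `k ↦ k+2 ↦ k+1 ↦ k` -/
def cyc' (k : ℕ) : Equiv.Perm ℕ := (Equiv.swap k (k+1)).trans (Equiv.swap (k+1) (k+2))

lemma cyc_apply (k x : ℕ) :
    cyc k x = if x = k then k + 1 else if x = k + 1 then k + 2 else if x = k + 2 then k else x := by
  simp only [cyc, Equiv.trans_apply, Equiv.swap_apply_def]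
  split_ifs <;> omega

lemma cyc'_apply (k x : ℕ) :
    cyc' k x = if x = k then k + 2 else if x = k + 1 then k else if x = k + 2 then k + 1 else x := by
  simp only [cyc', Equiv.trans_apply, Equiv.swap_apply_def]
  split_ifs <;> omega

lemma cyc'_cyc (k x : ℕ) : cyc' k (cyc k x) = x := by
  rw [cyc_apply, cyc'_apply]; split_ifs <;> omega

lemma cyc_cyc' (k x : ℕ) : cyc k (cyc' k x) = x := by
  rw [cyc'_apply, cyc_apply]; split_ifs <;> omega

lemma swap_succ_mono {k a b : ℕ} (h : a < b) (hne : ¬(a = k ∧ b = k + 1)) :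
    Equiv.swap k (k+1) a < Equiv.swap k (k+1) b := by
  rw [Equiv.swap_apply_def, Equiv.swap_apply_def]
  split_ifs <;> omega

lemma cyc_mono {k a b : ℕ} (h : a < b) (h1 : ¬(a = k + 1 ∧ b = k + 2))
    (h2 : ¬(a = k ∧ b = k + 2)) : cyc k a < cyc k b := by
  rw [cyc_apply, cyc_apply]; split_ifs <;> omega

lemma cyc'_mono {k a b : ℕ} (h : a < b) (h1 : ¬(a = k ∧ b = k + 1))
    (h2 : ¬(a = k ∧ b = k + 2)) : cyc' k a < cyc' k b := by
  rw [cyc'_apply, cyc'_apply]; split_ifs <;> omega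

lemma swap_succ_fix {k x : ℕ} (h1 : x ≠ k) (h2 : x ≠ k + 1) : Equiv.swap k (k+1) x = x :=
  Equiv.swap_apply_of_ne_of_ne h1 h2

lemma cyc_fix {k x : ℕ} (h1 : x ≠ k) (h2 : x ≠ k + 1) (h3 : x ≠ k + 2) : cyc k x = x := by
  rw [cyc_apply]; split_ifs <;> omega

lemma cyc'_fix {k x : ℕ} (h1 : x ≠ k) (h2 : x ≠ k + 1) (h3 : x ≠ k + 2) : cyc' k x = x := by
  rw [cyc'_apply]; split_ifs <;> omega

end Perms

namespace SYT

variable {μ : YoungDiagram} (T : SYT μ)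

lemma row_strict_of_adj {e : ℕ → ℕ → ℕ}
    (h : ∀ i j, (i, j + 1) ∈ μ → e i j < e i (j + 1)) :
    ∀ ⦃i j1 j2 : ℕ⦄, j1 < j2 → (i, j2) ∈ μ → e i j1 < e i j2 := by
  intro i j1 j2 hlt hmem
  induction j2 with
  | zero => omega
  | succ m ih =>
    rcases Nat.lt_or_ge j1 m with h' | h'
    · exact lt_trans (ih h' (μ.up_left_mem le_rfl (by omega) hmem)) (h i m hmem)
    · have : j1 = m := by omega
      subst this; exact h i j1 hmem

lemma col_strict_of_adj {e : ℕ → ℕ → ℕ}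
    (h : ∀ i j, (i + 1, j) ∈ μ → e i j < e (i + 1) j) :
    ∀ ⦃i1 i2 j : ℕ⦄, i1 < i2 → (i2, j) ∈ μ → e i1 j < e i2 j := by
  intro i1 i2 j hlt hmem
  induction i2 with
  | zero => omega
  | succ m ih =>
    rcases Nat.lt_or_ge i1 m with h' | h'
    · exact lt_trans (ih h' (μ.up_left_mem (by omega) le_rfl hmem)) (h m j hmem)
    · have : i1 = m := by omega
      subst this; exact h i1 j hmem

/-- relabelling an SYT by a permutation of the values -/
noncomputable def relabel (π : Equiv.Perm ℕ)
    (hfix : ∀ x, x ∉ Set.Icc 1 μ.card → π x = x)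
    (hrow : ∀ i j, (i, j + 1) ∈ μ → π (T.entry i j) < π (T.entry i (j + 1)))
    (hcol : ∀ i j, (i + 1, j) ∈ μ → π (T.entry i j) < π (T.entry (i + 1) j)) : SYT μ where
  entry i j := π (T.entry i j)
  row_strict := row_strict_of_adj (fun i j hm => hrow i j hm)
  col_strict := col_strict_of_adj (fun i j hm => hcol i j hm)
  zeros := by
    intro i j hij
    show π (T.entry i j) = 0
    rw [T.zeros hij]
    exact hfix 0 (by simp)
  bijOn := by
    have hπ : Set.BijOn π (Set.Icc 1 μ.card) (Set.Icc 1 μ.card) := by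
      refine ⟨?_, π.injective.injOn, ?_⟩
      · intro x hx
        by_contra hmem
        have h1 := hfix _ hmem
        have := π.injective h1
        rw [← this] at hx
        exact hmem hx
      · intro y hy
        refine ⟨π.symm y, ?_, by simp⟩
        by_contra hmem
        have h1 := hfix _ hmem
        rw [Equiv.apply_symm_apply] at h1
        exact hmem (h1 ▸ hy)
    exact hπ.comp T.bijOn

@[simp] lemma relabel_entry (π : Equiv.Perm ℕ) (hfix) (hrow) (hcol) (i j : ℕ) :
    (T.relabel π hfix hrow hcol).entry i j = π (T.entry i j) := rfl

lemma relabel_pos (π : Equiv.Perm ℕ) (hfix) (hrow) (hcol) {c : ℕ × ℕ} {v w : ℕ}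
    (hc : c ∈ μ) (he : T.entry c.1 c.2 = v) (hw : π v = w) :
    (T.relabel π hfix hrow hcol).pos w = c :=
  (T.relabel π hfix hrow hcol).pos_eq hc (by rw [relabel_entry, he, hw])

end SYT
namespace SYT

variable {μ : YoungDiagram}

/-- permutation of values used for the forward move -/
noncomputable def fwdPerm (T : SYT μ) (k : ℕ) : Equiv.Perm ℕ :=
  if (T.pos k).1 = (T.pos (k+1)).1 ∧ (T.pos k).1 = (T.pos (k+2)).1 then 1
  else if (T.pos (k+2)).1 = (T.pos (k+1)).1 ∨ (T.pos (k+2)).2 = (T.pos (k+1)).2 then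
    Equiv.swap k (k+1)
  else if (T.pos (k+2)).1 = (T.pos k).1 ∨ (T.pos (k+2)).2 = (T.pos k).2 then
    Equiv.swap (k+1) (k+2)
  else cyc k

/-- permutation of values used for the backward move -/
noncomputable def bwdPerm (S : SYT μ) (k : ℕ) : Equiv.Perm ℕ :=
  if (S.pos k).1 = (S.pos (k+1)).1 ∧ (S.pos k).1 = (S.pos (k+2)).1 then 1
  else if (S.pos k).1 = (S.pos (k+1)).1 ∨ (S.pos k).2 = (S.pos (k+1)).2 then
    Equiv.swap (k+1) (k+2)
  else if (S.pos k).1 = (S.pos (k+2)).1 ∨ (S.pos k).2 = (S.pos (k+2)).2 then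
    Equiv.swap k (k+1)
  else cyc' k

theorem fwd_cases (T : SYT μ) (k : ℕ) (hk1 : 1 ≤ k) (hk2 : k + 2 ≤ μ.card)
    (hT : ¬ T.DescentAt k) {motive : Prop}
    (c1 : (T.pos k).1 = (T.pos (k+1)).1 → (T.pos k).1 = (T.pos (k+2)).1 →
      (T.pos k).2 < (T.pos (k+1)).2 → (T.pos (k+1)).2 < (T.pos (k+2)).2 →
      fwdPerm T k = 1 → motive)
    (c2 : ((T.pos (k+2)).1 = (T.pos (k+1)).1 ∨ (T.pos (k+2)).2 = (T.pos (k+1)).2) →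
      (T.pos k).1 ≠ (T.pos (k+1)).1 → (T.pos k).2 < (T.pos (k+1)).2 →
      (T.pos k).2 < (T.pos (k+2)).2 → fwdPerm T k = Equiv.swap k (k+1) → motive)
    (c3 : ((T.pos (k+2)).1 = (T.pos k).1 ∨ (T.pos (k+2)).2 = (T.pos k).2) →
      ¬((T.pos (k+2)).1 = (T.pos (k+1)).1 ∨ (T.pos (k+2)).2 = (T.pos (k+1)).2) →
      ¬((T.pos k).1 = (T.pos (k+1)).1 ∧ (T.pos k).1 = (T.pos (k+2)).1) →
      (T.pos (k+2)).2 < (T.pos (k+1)).2 → (T.pos k).2 < (T.pos (k+1)).2 →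
      fwdPerm T k = Equiv.swap (k+1) (k+2) → motive)
    (c4 : ¬((T.pos (k+2)).1 = (T.pos k).1 ∨ (T.pos (k+2)).2 = (T.pos k).2) →
      ¬((T.pos (k+2)).1 = (T.pos (k+1)).1 ∨ (T.pos (k+2)).2 = (T.pos (k+1)).2) →
      ¬((T.pos k).1 = (T.pos (k+1)).1 ∧ (T.pos k).1 = (T.pos (k+2)).1) →
      (T.pos k).2 < (T.pos (k+1)).2 → fwdPerm T k = cyc k → motive) : motive := by
  have hkm : k ∈ Set.Icc 1 μ.card := mem_of_icc hk1 (by omega)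
  have hk1m : k + 1 ∈ Set.Icc 1 μ.card := mem_of_icc (by omega) (by omega)
  have hk2m : k + 2 ∈ Set.Icc 1 μ.card := mem_of_icc (by omega) hk2
  have hp1 := T.pos_mem hkm
  have hp2 := T.pos_mem hk1m
  have hp3 := T.pos_mem hk2m
  have he1 := T.entry_pos hkm
  have he2 := T.entry_pos hk1m
  have he3 := T.entry_pos hk2m
  have hp3' : ((T.pos (k+2)).1, (T.pos (k+2)).2) ∈ μ := hp3
  have hcol12 : (T.pos k).2 < (T.pos (k+1)).2 := (T.not_descent_iff hk1 (by omega)).1 hT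
  by_cases hB1 : (T.pos k).1 = (T.pos (k+1)).1 ∧ (T.pos k).1 = (T.pos (k+2)).1
  · refine c1 hB1.1 hB1.2 hcol12 ?_ ?_
    · exact T.col_lt_col hp2 hp3 (hB1.1 ▸ hB1.2) (by rw [he2, he3]; omega)
    · simp only [fwdPerm]; rw [if_pos hB1]
  · by_cases hA32 : (T.pos (k+2)).1 = (T.pos (k+1)).1 ∨ (T.pos (k+2)).2 = (T.pos (k+1)).2
    · -- case 2 : swap k (k+1)
      have hrow12 : (T.pos k).1 ≠ (T.pos (k+1)).1 := by
        intro h12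
        have hgap : (T.pos (k+1)).2 = (T.pos k).2 + 1 := T.gap_row hp1 hp2 h12 he1 he2
        rcases hA32 with h | h
        · exact hB1 ⟨h12, h12.trans h.symm⟩
        · -- pigeonhole : the cell below `k`, left of `k+2`, would have to contain `k+1`
          have hgap2 : (T.pos (k+2)).1 = (T.pos (k+1)).1 + 1 :=
            T.gap_col hp2 hp3 h.symm he2 he3
          have hx : ((T.pos (k+1)).1 + 1, (T.pos k).2) ∈ μ :=
            μ.up_left_mem (le_of_eq hgap2.symm) (by omega) hp3'
          have h1 : T.entry (T.pos k).1 (T.pos k).2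
              < T.entry ((T.pos (k+1)).1 + 1) (T.pos k).2 := by
            rw [h12]; exact T.col_strict (by omega) hx
          have h2 : T.entry ((T.pos (k+1)).1 + 1) (T.pos k).2
              < T.entry (T.pos (k+2)).1 (T.pos (k+2)).2 := by
            have hp3'' := hp3'
            rw [hgap2] at hp3'' ⊢
            exact T.row_strict (by omega) hp3''
          have hper := T.pos_eq hx
            (show T.entry ((T.pos (k+1)).1 + 1) (T.pos k).2 = k + 1 by omega)
          have := congrArg Prod.fst hper
          simp only at this
          omega
      have hcol13 : (T.pos k).2 < (T.pos (k+2)).2 := by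
        rcases hA32 with h | h
        · have := T.col_lt_col hp2 hp3 h.symm (by rw [he2, he3]; omega)
          omega
        · omega
      refine c2 hA32 hrow12 hcol12 hcol13 ?_
      simp only [fwdPerm]; rw [if_neg hB1, if_pos hA32]
    · by_cases hA31 : (T.pos (k+2)).1 = (T.pos k).1 ∨ (T.pos (k+2)).2 = (T.pos k).2
      · -- case 3 : swap (k+1) (k+2)
        have hcol32 : (T.pos (k+2)).2 < (T.pos (k+1)).2 := by
          push_neg at hA32
          rcases hA31 with h | h
          · have hlt : (T.pos k).2 < (T.pos (k+2)).2 :=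
              T.col_lt_col hp1 hp3 h.symm (by rw [he1, he3]; omega)
            have hadj : (T.pos (k+2)).2 = (T.pos k).2 + 1 := by
              by_contra hne
              have hmid : ((T.pos k).1, (T.pos k).2 + 1) ∈ μ :=
                μ.up_left_mem (le_of_eq h.symm) (by omega) hp3'
              have e1 : T.entry (T.pos k).1 (T.pos k).2
                  < T.entry (T.pos k).1 ((T.pos k).2 + 1) :=
                T.row_strict (by omega) hmid
              have e2 : T.entry (T.pos k).1 ((T.pos k).2 + 1)
                  < T.entry (T.pos (k+2)).1 (T.pos (k+2)).2 := by
                have hp3'' := hp3'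
                rw [h] at hp3'' ⊢
                exact T.row_strict (by omega) hp3''
              have hper := T.pos_eq hmid
                (show T.entry (T.pos k).1 ((T.pos k).2 + 1) = k + 1 by omega)
              have := congrArg Prod.fst hper
              simp only at this
              exact hB1 ⟨this.symm, h.symm⟩
            omega
          · omega
        refine c3 hA31 hA32 hB1 hcol32 hcol12 ?_
        simp only [fwdPerm]; rw [if_neg hB1, if_neg hA32, if_pos hA31]
      · refine c4 hA31 hA32 hB1 hcol12 ?_
        simp only [fwdPerm]; rw [if_neg hB1, if_neg hA32, if_neg hA31]

theorem bwd_cases (S : SYT μ) (k : ℕ) (hk1 : 1 ≤ k) (hk2 : k + 2 ≤ μ.card)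
    (hS : ¬ S.DescentAt (k+1)) {motive : Prop}
    (c1 : (S.pos k).1 = (S.pos (k+1)).1 → (S.pos k).1 = (S.pos (k+2)).1 →
      (S.pos k).2 < (S.pos (k+1)).2 → (S.pos (k+1)).2 < (S.pos (k+2)).2 →
      bwdPerm S k = 1 → motive)
    (c2 : ((S.pos k).1 = (S.pos (k+1)).1 ∨ (S.pos k).2 = (S.pos (k+1)).2) →
      (S.pos (k+1)).1 ≠ (S.pos (k+2)).1 → (S.pos (k+1)).2 < (S.pos (k+2)).2 →
      (S.pos k).2 < (S.pos (k+2)).2 →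
      ¬((S.pos k).1 = (S.pos (k+1)).1 ∧ (S.pos k).1 = (S.pos (k+2)).1) →
      bwdPerm S k = Equiv.swap (k+1) (k+2) → motive)
    (c3 : ((S.pos k).1 = (S.pos (k+2)).1 ∨ (S.pos k).2 = (S.pos (k+2)).2) →
      ¬((S.pos k).1 = (S.pos (k+1)).1 ∨ (S.pos k).2 = (S.pos (k+1)).2) →
      (S.pos (k+1)).2 < (S.pos k).2 → (S.pos (k+1)).2 < (S.pos (k+2)).2 →
      bwdPerm S k = Equiv.swap k (k+1) → motive)
    (c4 : ¬((S.pos k).1 = (S.pos (k+2)).1 ∨ (S.pos k).2 = (S.pos (k+2)).2) →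
      ¬((S.pos k).1 = (S.pos (k+1)).1 ∨ (S.pos k).2 = (S.pos (k+1)).2) →
      (S.pos (k+1)).2 < (S.pos (k+2)).2 → bwdPerm S k = cyc' k → motive) : motive := by
  have hkm : k ∈ Set.Icc 1 μ.card := mem_of_icc hk1 (by omega)
  have hk1m : k + 1 ∈ Set.Icc 1 μ.card := mem_of_icc (by omega) (by omega)
  have hk2m : k + 2 ∈ Set.Icc 1 μ.card := mem_of_icc (by omega) hk2
  have hp1 := S.pos_mem hkm
  have hp2 := S.pos_mem hk1m
  have hp3 := S.pos_mem hk2m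
  have he1 := S.entry_pos hkm
  have he2 := S.entry_pos hk1m
  have he3 := S.entry_pos hk2m
  have hp3' : ((S.pos (k+2)).1, (S.pos (k+2)).2) ∈ μ := hp3
  have hcol23 : (S.pos (k+1)).2 < (S.pos (k+2)).2 :=
    (S.not_descent_iff (k := k+1) (by omega) (by omega)).1 hS
  by_cases hC1 : (S.pos k).1 = (S.pos (k+1)).1 ∧ (S.pos k).1 = (S.pos (k+2)).1
  · refine c1 hC1.1 hC1.2 ?_ hcol23 ?_
    · exact S.col_lt_col hp1 hp2 hC1.1 (by rw [he1, he2]; omega)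
    · simp only [bwdPerm]; rw [if_pos hC1]
  · by_cases hA12 : (S.pos k).1 = (S.pos (k+1)).1 ∨ (S.pos k).2 = (S.pos (k+1)).2
    · -- case 2 : swap (k+1) (k+2)
      have hrow23 : (S.pos (k+1)).1 ≠ (S.pos (k+2)).1 := by
        intro h23
        have hgap : (S.pos (k+2)).2 = (S.pos (k+1)).2 + 1 := S.gap_row hp2 hp3 h23 he2 he3
        rcases hA12 with h | h
        · exact hC1 ⟨h, h.trans h23⟩
        · -- pigeonhole : the cell right of `k`, above `k+2`, would have to contain `k+1`
          have hgap2 : (S.pos (k+1)).1 = (S.pos k).1 + 1 := S.gap_col hp1 hp2 h he1 he2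
          have hx : ((S.pos k).1, (S.pos (k+1)).2 + 1) ∈ μ :=
            μ.up_left_mem (by omega) (by omega) hp3'
          have h1 : S.entry (S.pos k).1 (S.pos k).2
              < S.entry (S.pos k).1 ((S.pos (k+1)).2 + 1) :=
            S.row_strict (by omega) hx
          have h2 : S.entry (S.pos k).1 ((S.pos (k+1)).2 + 1)
              < S.entry (S.pos (k+2)).1 (S.pos (k+2)).2 := by
            rw [hgap]
            apply S.col_strict (by omega)
            rw [← hgap]; exact hp3'
          have hper := S.pos_eq hx
            (show S.entry (S.pos k).1 ((S.pos (k+1)).2 + 1) = k + 1 by omega)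
          have := congrArg Prod.fst hper
          simp only at this
          omega
      have hcol13 : (S.pos k).2 < (S.pos (k+2)).2 := by
        rcases hA12 with h | h
        · have := S.col_lt_col hp1 hp2 h (by rw [he1, he2]; omega)
          omega
        · omega
      refine c2 hA12 hrow23 hcol23 hcol13 hC1 ?_
      simp only [bwdPerm]; rw [if_neg hC1, if_pos hA12]
    · by_cases hA13 : (S.pos k).1 = (S.pos (k+2)).1 ∨ (S.pos k).2 = (S.pos (k+2)).2
      · -- case 3 : swap k (k+1)
        have hcol21 : (S.pos (k+1)).2 < (S.pos k).2 := by
          push_neg at hA12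
          rcases hA13 with h | h
          · have hlt : (S.pos k).2 < (S.pos (k+2)).2 :=
              S.col_lt_col hp1 hp3 h (by rw [he1, he3]; omega)
            have hadj : (S.pos (k+2)).2 = (S.pos k).2 + 1 := by
              by_contra hne
              have hmid : ((S.pos k).1, (S.pos k).2 + 1) ∈ μ :=
                μ.up_left_mem (le_of_eq h) (by omega) hp3'
              have e1 : S.entry (S.pos k).1 (S.pos k).2
                  < S.entry (S.pos k).1 ((S.pos k).2 + 1) :=
                S.row_strict (by omega) hmid
              have e2 : S.entry (S.pos k).1 ((S.pos k).2 + 1)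
                  < S.entry (S.pos (k+2)).1 (S.pos (k+2)).2 := by
                have hp3'' := hp3'
                rw [← h] at hp3'' ⊢
                exact S.row_strict (by omega) hp3''
              have hper := S.pos_eq hmid
                (show S.entry (S.pos k).1 ((S.pos k).2 + 1) = k + 1 by omega)
              have := congrArg Prod.fst hper
              simp only at this
              exact hA12.1 this.symm
            omega
          · omega
        refine c3 hA13 hA12 hcol21 hcol23 ?_
        simp only [bwdPerm]; rw [if_neg hC1, if_neg hA12, if_pos hA13]
      · refine c4 hA13 hA12 hcol23 ?_
        simp only [bwdPerm]; rw [if_neg hC1, if_neg hA12, if_neg hA13]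

end SYT
namespace SYT

variable {μ : YoungDiagram}

lemma fwdPerm_fix (T : SYT μ) (k : ℕ) {x : ℕ} (h1 : x ≠ k) (h2 : x ≠ k+1) (h3 : x ≠ k+2) :
    fwdPerm T k x = x := by
  simp only [fwdPerm]
  split_ifs <;>
    first
      | rfl
      | exact Equiv.swap_apply_of_ne_of_ne h1 h2
      | exact Equiv.swap_apply_of_ne_of_ne h2 h3
      | exact cyc_fix h1 h2 h3

lemma bwdPerm_fix (S : SYT μ) (k : ℕ) {x : ℕ} (h1 : x ≠ k) (h2 : x ≠ k+1) (h3 : x ≠ k+2) :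
    bwdPerm S k x = x := by
  simp only [bwdPerm]
  split_ifs <;>
    first
      | rfl
      | exact Equiv.swap_apply_of_ne_of_ne h1 h2
      | exact Equiv.swap_apply_of_ne_of_ne h2 h3
      | exact cyc'_fix h1 h2 h3

lemma fwd_hfix (T : SYT μ) (k : ℕ) (hk1 : 1 ≤ k) (hk2 : k + 2 ≤ μ.card) :
    ∀ x, x ∉ Set.Icc 1 μ.card → fwdPerm T k x = x := by
  intro x hx
  refine fwdPerm_fix T k ?_ ?_ ?_ <;> rintro rfl <;> exact hx (mem_of_icc (by omega) (by omega))

lemma bwd_hfix (S : SYT μ) (k : ℕ) (hk1 : 1 ≤ k) (hk2 : k + 2 ≤ μ.card) :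
    ∀ x, x ∉ Set.Icc 1 μ.card → bwdPerm S k x = x := by
  intro x hx
  refine bwdPerm_fix S k ?_ ?_ ?_ <;> rintro rfl <;> exact hx (mem_of_icc (by omega) (by omega))

lemma fwd_hrow (T : SYT μ) (k : ℕ) (hk1 : 1 ≤ k) (hk2 : k + 2 ≤ μ.card)
    (hT : ¬T.DescentAt k) :
    ∀ i j, (i, j + 1) ∈ μ → fwdPerm T k (T.entry i j) < fwdPerm T k (T.entry i (j + 1)) := by
  intro i j hm
  have hmem : (i, j) ∈ μ := μ.up_left_mem le_rfl (by omega) hm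
  have hab : T.entry i j < T.entry i (j + 1) := T.row_strict (by omega) hm
  refine T.fwd_cases k hk1 hk2 hT ?_ ?_ ?_ ?_
  · intro _ _ _ _ hπ; rw [hπ]; simpa using hab
  · intro _ hrow12 _ _ hπ
    rw [hπ]
    refine swap_succ_mono hab ?_
    rintro ⟨ha, hb⟩
    exact hrow12 (by rw [T.pos_eq hmem ha, T.pos_eq hm hb])
  · intro _ hA32 _ _ _ hπ
    rw [hπ]
    refine swap_succ_mono hab ?_
    rintro ⟨ha, hb⟩
    exact hA32 (Or.inl (by rw [T.pos_eq hmem ha, T.pos_eq hm hb]))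
  · intro hA31 hA32 _ _ hπ
    rw [hπ]
    refine cyc_mono hab ?_ ?_
    · rintro ⟨ha, hb⟩
      exact hA32 (Or.inl (by rw [T.pos_eq hmem ha, T.pos_eq hm hb]))
    · rintro ⟨ha, hb⟩
      exact hA31 (Or.inl (by rw [T.pos_eq hmem ha, T.pos_eq hm hb]))

lemma fwd_hcol (T : SYT μ) (k : ℕ) (hk1 : 1 ≤ k) (hk2 : k + 2 ≤ μ.card)
    (hT : ¬T.DescentAt k) :
    ∀ i j, (i + 1, j) ∈ μ → fwdPerm T k (T.entry i j) < fwdPerm T k (T.entry (i + 1) j) := by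
  intro i j hm
  have hmem : (i, j) ∈ μ := μ.up_left_mem (by omega) le_rfl hm
  have hab : T.entry i j < T.entry (i + 1) j := T.col_strict (by omega) hm
  refine T.fwd_cases k hk1 hk2 hT ?_ ?_ ?_ ?_
  · intro _ _ _ _ hπ; rw [hπ]; simpa using hab
  · intro _ _ hc12 _ hπ
    rw [hπ]
    refine swap_succ_mono hab ?_
    rintro ⟨ha, hb⟩
    rw [T.pos_eq hmem ha, T.pos_eq hm hb] at hc12
    simp at hc12
  · intro _ hA32 _ _ _ hπ
    rw [hπ]
    refine swap_succ_mono hab ?_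
    rintro ⟨ha, hb⟩
    exact hA32 (Or.inr (by rw [T.pos_eq hmem ha, T.pos_eq hm hb]))
  · intro hA31 hA32 _ _ hπ
    rw [hπ]
    refine cyc_mono hab ?_ ?_
    · rintro ⟨ha, hb⟩
      exact hA32 (Or.inr (by rw [T.pos_eq hmem ha, T.pos_eq hm hb]))
    · rintro ⟨ha, hb⟩
      exact hA31 (Or.inr (by rw [T.pos_eq hmem ha, T.pos_eq hm hb]))

lemma bwd_hrow (S : SYT μ) (k : ℕ) (hk1 : 1 ≤ k) (hk2 : k + 2 ≤ μ.card)
    (hS : ¬S.DescentAt (k+1)) :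
    ∀ i j, (i, j + 1) ∈ μ → bwdPerm S k (S.entry i j) < bwdPerm S k (S.entry i (j + 1)) := by
  intro i j hm
  have hmem : (i, j) ∈ μ := μ.up_left_mem le_rfl (by omega) hm
  have hab : S.entry i j < S.entry i (j + 1) := S.row_strict (by omega) hm
  refine S.bwd_cases k hk1 hk2 hS ?_ ?_ ?_ ?_
  · intro _ _ _ _ hπ; rw [hπ]; simpa using hab
  · intro _ hrow23 _ _ _ hπ
    rw [hπ]
    refine swap_succ_mono hab ?_
    rintro ⟨ha, hb⟩
    exact hrow23 (by rw [S.pos_eq hmem ha, S.pos_eq hm hb])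
  · intro _ hA12 _ _ hπ
    rw [hπ]
    refine swap_succ_mono hab ?_
    rintro ⟨ha, hb⟩
    exact hA12 (Or.inl (by rw [S.pos_eq hmem ha, S.pos_eq hm hb]))
  · intro hA13 hA12 _ hπ
    rw [hπ]
    refine cyc'_mono hab ?_ ?_
    · rintro ⟨ha, hb⟩
      exact hA12 (Or.inl (by rw [S.pos_eq hmem ha, S.pos_eq hm hb]))
    · rintro ⟨ha, hb⟩
      exact hA13 (Or.inl (by rw [S.pos_eq hmem ha, S.pos_eq hm hb]))

lemma bwd_hcol (S : SYT μ) (k : ℕ) (hk1 : 1 ≤ k) (hk2 : k + 2 ≤ μ.card)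
    (hS : ¬S.DescentAt (k+1)) :
    ∀ i j, (i + 1, j) ∈ μ → bwdPerm S k (S.entry i j) < bwdPerm S k (S.entry (i + 1) j) := by
  intro i j hm
  have hmem : (i, j) ∈ μ := μ.up_left_mem (by omega) le_rfl hm
  have hab : S.entry i j < S.entry (i + 1) j := S.col_strict (by omega) hm
  refine S.bwd_cases k hk1 hk2 hS ?_ ?_ ?_ ?_
  · intro _ _ _ _ hπ; rw [hπ]; simpa using hab
  · intro _ _ hc23 _ _ hπ
    rw [hπ]
    refine swap_succ_mono hab ?_
    rintro ⟨ha, hb⟩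
    rw [S.pos_eq hmem ha, S.pos_eq hm hb] at hc23
    simp at hc23
  · intro _ hA12 _ _ hπ
    rw [hπ]
    refine swap_succ_mono hab ?_
    rintro ⟨ha, hb⟩
    exact hA12 (Or.inr (by rw [S.pos_eq hmem ha, S.pos_eq hm hb]))
  · intro hA13 hA12 _ hπ
    rw [hπ]
    refine cyc'_mono hab ?_ ?_
    · rintro ⟨ha, hb⟩
      exact hA12 (Or.inr (by rw [S.pos_eq hmem ha, S.pos_eq hm hb]))
    · rintro ⟨ha, hb⟩
      exact hA13 (Or.inr (by rw [S.pos_eq hmem ha, S.pos_eq hm hb]))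

/-- the forward move -/
noncomputable def fwdT (T : SYT μ) (k : ℕ) (hk1 : 1 ≤ k) (hk2 : k + 2 ≤ μ.card)
    (hT : ¬T.DescentAt k) : SYT μ :=
  T.relabel (fwdPerm T k) (fwd_hfix T k hk1 hk2) (fwd_hrow T k hk1 hk2 hT)
    (fwd_hcol T k hk1 hk2 hT)

/-- the backward move -/
noncomputable def bwdT (S : SYT μ) (k : ℕ) (hk1 : 1 ≤ k) (hk2 : k + 2 ≤ μ.card)
    (hS : ¬S.DescentAt (k+1)) : SYT μ :=
  S.relabel (bwdPerm S k) (bwd_hfix S k hk1 hk2) (bwd_hrow S k hk1 hk2 hS)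
    (bwd_hcol S k hk1 hk2 hS)

@[simp] lemma fwdT_entry (T : SYT μ) (k : ℕ) (hk1) (hk2) (hT) (i j : ℕ) :
    (fwdT T k hk1 hk2 hT).entry i j = fwdPerm T k (T.entry i j) := rfl

@[simp] lemma bwdT_entry (S : SYT μ) (k : ℕ) (hk1) (hk2) (hS) (i j : ℕ) :
    (bwdT S k hk1 hk2 hS).entry i j = bwdPerm S k (S.entry i j) := rfl

lemma fwdT_pos (T : SYT μ) (k : ℕ) (hk1) (hk2) (hT) {u v : ℕ}
    (hu : u ∈ Set.Icc 1 μ.card) (hw : fwdPerm T k u = v) :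
    (fwdT T k hk1 hk2 hT).pos v = T.pos u :=
  T.relabel_pos _ _ _ _ (T.pos_mem hu) (T.entry_pos hu) hw

lemma bwdT_pos (S : SYT μ) (k : ℕ) (hk1) (hk2) (hS) {u v : ℕ}
    (hu : u ∈ Set.Icc 1 μ.card) (hw : bwdPerm S k u = v) :
    (bwdT S k hk1 hk2 hS).pos v = S.pos u :=
  S.relabel_pos _ _ _ _ (S.pos_mem hu) (S.entry_pos hu) hw

end SYT
namespace SYT

variable {μ : YoungDiagram}

lemma fwdT_nodesc (T : SYT μ) (k : ℕ) (hk1 : 1 ≤ k) (hk2 : k + 2 ≤ μ.card)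
    (hT : ¬T.DescentAt k) : ¬ (fwdT T k hk1 hk2 hT).DescentAt (k+1) := by
  rw [(fwdT T k hk1 hk2 hT).not_descent_iff (by omega) (by omega)]
  have hkm : k ∈ Set.Icc 1 μ.card := mem_of_icc hk1 (by omega)
  have hk1m : k + 1 ∈ Set.Icc 1 μ.card := mem_of_icc (by omega) (by omega)
  have hk2m : k + 2 ∈ Set.Icc 1 μ.card := mem_of_icc (by omega) hk2
  refine T.fwd_cases k hk1 hk2 hT ?_ ?_ ?_ ?_
  · intro _ _ _ hc23 hπ
    rw [fwdT_pos T k hk1 hk2 hT hk1m (by rw [hπ]; rfl),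
        fwdT_pos T k hk1 hk2 hT hk2m (by rw [hπ]; rfl)]
    exact hc23
  · intro _ _ _ hc13 hπ
    rw [fwdT_pos T k hk1 hk2 hT hkm (by rw [hπ]; exact Equiv.swap_apply_left _ _),
        fwdT_pos T k hk1 hk2 hT hk2m
          (by rw [hπ]; exact Equiv.swap_apply_of_ne_of_ne (by omega) (by omega))]
    exact hc13
  · intro _ _ _ hc32 _ hπ
    rw [fwdT_pos T k hk1 hk2 hT hk2m (by rw [hπ]; exact Equiv.swap_apply_right _ _),
        fwdT_pos T k hk1 hk2 hT hk1m (by rw [hπ]; exact Equiv.swap_apply_left _ _)]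
    exact hc32
  · intro _ _ _ hc12 hπ
    rw [fwdT_pos T k hk1 hk2 hT hkm (by rw [hπ, cyc_apply]; split_ifs <;> omega),
        fwdT_pos T k hk1 hk2 hT hk1m (by rw [hπ, cyc_apply]; split_ifs <;> omega)]
    exact hc12

lemma bwdT_nodesc (S : SYT μ) (k : ℕ) (hk1 : 1 ≤ k) (hk2 : k + 2 ≤ μ.card)
    (hS : ¬S.DescentAt (k+1)) : ¬ (bwdT S k hk1 hk2 hS).DescentAt k := by
  rw [(bwdT S k hk1 hk2 hS).not_descent_iff hk1 (by omega)]
  have hkm : k ∈ Set.Icc 1 μ.card := mem_of_icc hk1 (by omega)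
  have hk1m : k + 1 ∈ Set.Icc 1 μ.card := mem_of_icc (by omega) (by omega)
  have hk2m : k + 2 ∈ Set.Icc 1 μ.card := mem_of_icc (by omega) hk2
  refine S.bwd_cases k hk1 hk2 hS ?_ ?_ ?_ ?_
  · intro _ _ hc12 _ hπ
    rw [bwdT_pos S k hk1 hk2 hS hkm (by rw [hπ]; rfl),
        bwdT_pos S k hk1 hk2 hS hk1m (by rw [hπ]; rfl)]
    exact hc12
  · intro _ _ _ hc13 _ hπ
    rw [bwdT_pos S k hk1 hk2 hS hkm
          (by rw [hπ]; exact Equiv.swap_apply_of_ne_of_ne (by omega) (by omega)),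
        bwdT_pos S k hk1 hk2 hS hk2m (by rw [hπ]; exact Equiv.swap_apply_right _ _)]
    exact hc13
  · intro _ _ hc21 _ hπ
    rw [bwdT_pos S k hk1 hk2 hS hk1m (by rw [hπ]; exact Equiv.swap_apply_right _ _),
        bwdT_pos S k hk1 hk2 hS hkm (by rw [hπ]; exact Equiv.swap_apply_left _ _)]
    exact hc21
  · intro _ _ hc23 hπ
    rw [bwdT_pos S k hk1 hk2 hS hk1m (by rw [hπ, cyc'_apply]; split_ifs <;> omega),
        bwdT_pos S k hk1 hk2 hS hk2m (by rw [hπ, cyc'_apply]; split_ifs <;> omega)]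
    exact hc23

lemma fwdT_descent_iff (T : SYT μ) (k : ℕ) (hk1) (hk2) (hT) {m : ℕ}
    (hm1 : 1 ≤ m) (hm2 : m + 1 ≤ μ.card) (hd : m + 1 < k ∨ k + 2 < m) :
    (fwdT T k hk1 hk2 hT).DescentAt m ↔ T.DescentAt m := by
  have hmm : m ∈ Set.Icc 1 μ.card := mem_of_icc hm1 (by omega)
  have hm1m : m + 1 ∈ Set.Icc 1 μ.card := mem_of_icc (by omega) hm2
  rw [(fwdT T k hk1 hk2 hT).descent_iff hm1 hm2, T.descent_iff hm1 hm2,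
    fwdT_pos T k hk1 hk2 hT hmm (fwdPerm_fix T k (by omega) (by omega) (by omega)),
    fwdT_pos T k hk1 hk2 hT hm1m (fwdPerm_fix T k (by omega) (by omega) (by omega))]

lemma bwdT_descent_iff (S : SYT μ) (k : ℕ) (hk1) (hk2) (hS) {m : ℕ}
    (hm1 : 1 ≤ m) (hm2 : m + 1 ≤ μ.card) (hd : m + 1 < k ∨ k + 2 < m) :
    (bwdT S k hk1 hk2 hS).DescentAt m ↔ S.DescentAt m := by
  have hmm : m ∈ Set.Icc 1 μ.card := mem_of_icc hm1 (by omega)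
  have hm1m : m + 1 ∈ Set.Icc 1 μ.card := mem_of_icc (by omega) hm2
  rw [(bwdT S k hk1 hk2 hS).descent_iff hm1 hm2, S.descent_iff hm1 hm2,
    bwdT_pos S k hk1 hk2 hS hmm (bwdPerm_fix S k (by omega) (by omega) (by omega)),
    bwdT_pos S k hk1 hk2 hS hm1m (bwdPerm_fix S k (by omega) (by omega) (by omega))]

theorem bwdT_fwdT (T : SYT μ) (k : ℕ) (hk1 : 1 ≤ k) (hk2 : k + 2 ≤ μ.card)
    (hT : ¬T.DescentAt k) (hS : ¬(fwdT T k hk1 hk2 hT).DescentAt (k+1)) :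
    bwdT (fwdT T k hk1 hk2 hT) k hk1 hk2 hS = T := by
  have hkm : k ∈ Set.Icc 1 μ.card := mem_of_icc hk1 (by omega)
  have hk1m : k + 1 ∈ Set.Icc 1 μ.card := mem_of_icc (by omega) (by omega)
  have hk2m : k + 2 ∈ Set.Icc 1 μ.card := mem_of_icc (by omega) hk2
  have key : ∀ x, bwdPerm (fwdT T k hk1 hk2 hT) k (fwdPerm T k x) = x := by
    refine T.fwd_cases k hk1 hk2 hT ?_ ?_ ?_ ?_
    · intro h12 h13 _ _ hπ
      have q1 := fwdT_pos T k hk1 hk2 hT hkm (v := k) (by rw [hπ]; rfl)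
      have q2 := fwdT_pos T k hk1 hk2 hT hk1m (v := k+1) (by rw [hπ]; rfl)
      have q3 := fwdT_pos T k hk1 hk2 hT hk2m (v := k+2) (by rw [hπ]; rfl)
      have hb : bwdPerm (fwdT T k hk1 hk2 hT) k = 1 := by
        have hc : (T.pos k).1 = (T.pos (k+1)).1 ∧ (T.pos k).1 = (T.pos (k+2)).1 := ⟨h12, h13⟩
        simp only [bwdPerm]; rw [q1, q2, q3, if_pos hc]
      intro x; rw [hπ, hb]; rfl
    · intro hA32 hrow12 hc12 _ hπ
      have q1 := fwdT_pos T k hk1 hk2 hT hk1m (v := k)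
        (by rw [hπ]; exact Equiv.swap_apply_right _ _)
      have q2 := fwdT_pos T k hk1 hk2 hT hkm (v := k+1)
        (by rw [hπ]; exact Equiv.swap_apply_left _ _)
      have q3 := fwdT_pos T k hk1 hk2 hT hk2m (v := k+2)
        (by rw [hπ]; exact Equiv.swap_apply_of_ne_of_ne (by omega) (by omega))
      have hb : bwdPerm (fwdT T k hk1 hk2 hT) k = Equiv.swap k (k+1) := by
        simp only [bwdPerm]; rw [q1, q2, q3]
        rw [if_neg (fun h => hrow12 h.1.symm),
          if_neg (by rintro (a | b); exacts [hrow12 a.symm, by omega]),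
          if_pos (by rcases hA32 with h | h; exacts [Or.inl h.symm, Or.inr h.symm])]
      intro x; rw [hπ, hb]; exact Equiv.swap_apply_self _ _ _
    · intro hA31 hA32 hB1 _ _ hπ
      have q1 := fwdT_pos T k hk1 hk2 hT hkm (v := k)
        (by rw [hπ]; exact Equiv.swap_apply_of_ne_of_ne (by omega) (by omega))
      have q2 := fwdT_pos T k hk1 hk2 hT hk2m (v := k+1)
        (by rw [hπ]; exact Equiv.swap_apply_right _ _)
      have q3 := fwdT_pos T k hk1 hk2 hT hk1m (v := k+2)
        (by rw [hπ]; exact Equiv.swap_apply_left _ _)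
      have hb : bwdPerm (fwdT T k hk1 hk2 hT) k = Equiv.swap (k+1) (k+2) := by
        simp only [bwdPerm]; rw [q1, q2, q3]
        rw [if_neg (fun h => hB1 ⟨h.2, h.1⟩),
          if_pos (by rcases hA31 with h | h; exacts [Or.inl h.symm, Or.inr h.symm])]
      intro x; rw [hπ, hb]; exact Equiv.swap_apply_self _ _ _
    · intro hA31 hA32 hB1 _ hπ
      have q1 := fwdT_pos T k hk1 hk2 hT hk2m (v := k)
        (by rw [hπ, cyc_apply]; split_ifs <;> omega)
      have q2 := fwdT_pos T k hk1 hk2 hT hkm (v := k+1)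
        (by rw [hπ, cyc_apply]; split_ifs <;> omega)
      have q3 := fwdT_pos T k hk1 hk2 hT hk1m (v := k+2)
        (by rw [hπ, cyc_apply]; split_ifs <;> omega)
      have hb : bwdPerm (fwdT T k hk1 hk2 hT) k = cyc' k := by
        simp only [bwdPerm]; rw [q1, q2, q3]
        rw [if_neg (fun h => hA31 (Or.inl h.1)), if_neg hA31, if_neg hA32]
      intro x; rw [hπ, hb]; exact cyc'_cyc k x
  apply ext'; funext i j
  exact key (T.entry i j)

theorem fwdT_bwdT (S : SYT μ) (k : ℕ) (hk1 : 1 ≤ k) (hk2 : k + 2 ≤ μ.card)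
    (hS : ¬S.DescentAt (k+1)) (hT : ¬(bwdT S k hk1 hk2 hS).DescentAt k) :
    fwdT (bwdT S k hk1 hk2 hS) k hk1 hk2 hT = S := by
  have hkm : k ∈ Set.Icc 1 μ.card := mem_of_icc hk1 (by omega)
  have hk1m : k + 1 ∈ Set.Icc 1 μ.card := mem_of_icc (by omega) (by omega)
  have hk2m : k + 2 ∈ Set.Icc 1 μ.card := mem_of_icc (by omega) hk2
  have key : ∀ x, fwdPerm (bwdT S k hk1 hk2 hS) k (bwdPerm S k x) = x := by
    refine S.bwd_cases k hk1 hk2 hS ?_ ?_ ?_ ?_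
    · intro h12 h13 _ _ hπ
      have q1 := bwdT_pos S k hk1 hk2 hS hkm (v := k) (by rw [hπ]; rfl)
      have q2 := bwdT_pos S k hk1 hk2 hS hk1m (v := k+1) (by rw [hπ]; rfl)
      have q3 := bwdT_pos S k hk1 hk2 hS hk2m (v := k+2) (by rw [hπ]; rfl)
      have hb : fwdPerm (bwdT S k hk1 hk2 hS) k = 1 := by
        have hc : (S.pos k).1 = (S.pos (k+1)).1 ∧ (S.pos k).1 = (S.pos (k+2)).1 := ⟨h12, h13⟩
        simp only [fwdPerm]; rw [q1, q2, q3, if_pos hc]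
      intro x; rw [hπ, hb]; rfl
    · intro hA12 hrow23 hc23 _ hC1 hπ
      have q1 := bwdT_pos S k hk1 hk2 hS hkm (v := k)
        (by rw [hπ]; exact Equiv.swap_apply_of_ne_of_ne (by omega) (by omega))
      have q2 := bwdT_pos S k hk1 hk2 hS hk2m (v := k+1)
        (by rw [hπ]; exact Equiv.swap_apply_right _ _)
      have q3 := bwdT_pos S k hk1 hk2 hS hk1m (v := k+2)
        (by rw [hπ]; exact Equiv.swap_apply_left _ _)
      have hb : fwdPerm (bwdT S k hk1 hk2 hS) k = Equiv.swap (k+1) (k+2) := by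
        simp only [fwdPerm]; rw [q1, q2, q3]
        rw [if_neg (fun h => hC1 ⟨h.2, h.1⟩),
          if_neg (by rintro (a | b); exacts [hrow23 a, by omega]),
          if_pos (by rcases hA12 with h | h; exacts [Or.inl h.symm, Or.inr h.symm])]
      intro x; rw [hπ, hb]; exact Equiv.swap_apply_self _ _ _
    · intro hA13 hA12 _ _ hπ
      have q1 := bwdT_pos S k hk1 hk2 hS hk1m (v := k)
        (by rw [hπ]; exact Equiv.swap_apply_right _ _)
      have q2 := bwdT_pos S k hk1 hk2 hS hkm (v := k+1)
        (by rw [hπ]; exact Equiv.swap_apply_left _ _)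
      have q3 := bwdT_pos S k hk1 hk2 hS hk2m (v := k+2)
        (by rw [hπ]; exact Equiv.swap_apply_of_ne_of_ne (by omega) (by omega))
      have hb : fwdPerm (bwdT S k hk1 hk2 hS) k = Equiv.swap k (k+1) := by
        simp only [fwdPerm]; rw [q1, q2, q3]
        rw [if_neg (by rintro ⟨a, b⟩; exact hA12 (Or.inl a.symm)),
          if_pos (by rcases hA13 with h | h; exacts [Or.inl h.symm, Or.inr h.symm])]
      intro x; rw [hπ, hb]; exact Equiv.swap_apply_self _ _ _
    · intro hA13 hA12 _ hπ
      have q1 := bwdT_pos S k hk1 hk2 hS hk1m (v := k)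
        (by rw [hπ, cyc'_apply]; split_ifs <;> omega)
      have q2 := bwdT_pos S k hk1 hk2 hS hk2m (v := k+1)
        (by rw [hπ, cyc'_apply]; split_ifs <;> omega)
      have q3 := bwdT_pos S k hk1 hk2 hS hkm (v := k+2)
        (by rw [hπ, cyc'_apply]; split_ifs <;> omega)
      have hb : fwdPerm (bwdT S k hk1 hk2 hS) k = cyc k := by
        simp only [fwdPerm]; rw [q1, q2, q3]
        rw [if_neg (by rintro ⟨_, b⟩; exact hA12 (Or.inl b.symm)), if_neg hA13, if_neg hA12]
      intro x; rw [hπ, hb]; exact cyc_cyc' k x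
  apply ext'; funext i j
  exact key (S.entry i j)

end SYT
namespace SYT

variable {μ : YoungDiagram}

/-- moving the first non-descent from `k` to `k+1`, preserving a far-away non-descent at `m` -/
noncomputable def moveEquiv (μ : YoungDiagram) (k m : ℕ) (hk1 : 1 ≤ k) (hk2 : k + 2 ≤ μ.card)
    (hm1 : 1 ≤ m) (hm2 : m + 1 ≤ μ.card) (hd : m + 1 < k ∨ k + 2 < m) :
    {T : SYT μ // ¬T.DescentAt k ∧ ¬T.DescentAt m} ≃
      {T : SYT μ // ¬T.DescentAt (k+1) ∧ ¬T.DescentAt m} where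
  toFun := fun T => ⟨fwdT T.1 k hk1 hk2 T.2.1, fwdT_nodesc _ k hk1 hk2 T.2.1,
    fun h => T.2.2 ((fwdT_descent_iff T.1 k hk1 hk2 T.2.1 hm1 hm2 hd).1 h)⟩
  invFun := fun S => ⟨bwdT S.1 k hk1 hk2 S.2.1, bwdT_nodesc _ k hk1 hk2 S.2.1,
    fun h => S.2.2 ((bwdT_descent_iff S.1 k hk1 hk2 S.2.1 hm1 hm2 hd).1 h)⟩
  left_inv := fun T => Subtype.ext (bwdT_fwdT T.1 k hk1 hk2 T.2.1 (fwdT_nodesc _ k hk1 hk2 T.2.1))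
  right_inv := fun S => Subtype.ext (fwdT_bwdT S.1 k hk1 hk2 S.2.1 (bwdT_nodesc _ k hk1 hk2 S.2.1))

lemma card_and_comm (P Q : SYT μ → Prop) :
    Nat.card {T : SYT μ // P T ∧ Q T} = Nat.card {T : SYT μ // Q T ∧ P T} :=
  Nat.card_congr (Equiv.subtypeEquivRight (fun _ => and_comm))

lemma count_step (k m : ℕ) (hk1 : 1 ≤ k) (hk2 : k + 2 ≤ μ.card)
    (hm1 : 1 ≤ m) (hm2 : m + 1 ≤ μ.card) (hd : m + 1 < k ∨ k + 2 < m) :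
    Nat.card {T : SYT μ // ¬T.DescentAt k ∧ ¬T.DescentAt m} =
      Nat.card {T : SYT μ // ¬T.DescentAt (k+1) ∧ ¬T.DescentAt m} :=
  Nat.card_congr (moveEquiv μ k m hk1 hk2 hm1 hm2 hd)

lemma normb (a : ℕ) : ∀ b, 1 ≤ b → b + 1 < a → a + 1 ≤ μ.card →
    Nat.card {T : SYT μ // ¬T.DescentAt a ∧ ¬T.DescentAt b} =
      Nat.card {T : SYT μ // ¬T.DescentAt a ∧ ¬T.DescentAt 1} := by
  intro b
  induction b with
  | zero => omega
  | succ c ih =>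
    intro h1 h2 h3
    rcases Nat.eq_zero_or_pos c with rfl | hc
    · rfl
    · have e1 : Nat.card {T : SYT μ // ¬T.DescentAt a ∧ ¬T.DescentAt (c+1)} =
          Nat.card {T : SYT μ // ¬T.DescentAt a ∧ ¬T.DescentAt c} := by
        rw [card_and_comm, card_and_comm (fun T => ¬T.DescentAt a)]
        exact (count_step c a hc (by omega) (by omega) h3 (by omega)).symm
      rw [e1, ih hc (by omega) h3]

lemma norma : ∀ a, 3 ≤ a → a + 1 ≤ μ.card →
    Nat.card {T : SYT μ // ¬T.DescentAt a ∧ ¬T.DescentAt 1} =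
      Nat.card {T : SYT μ // ¬T.DescentAt 3 ∧ ¬T.DescentAt 1} := by
  intro a
  induction a with
  | zero => omega
  | succ c ih =>
    intro h1 h2
    rcases Nat.lt_or_ge c 3 with hc | hc
    · have : c = 2 := by omega
      subst this; rfl
    · have e1 : Nat.card {T : SYT μ // ¬T.DescentAt (c+1) ∧ ¬T.DescentAt 1} =
          Nat.card {T : SYT μ // ¬T.DescentAt c ∧ ¬T.DescentAt 1} :=
        (count_step c 1 (by omega) (by omega) (by omega) (by omega) (by omega)).symm
      rw [e1, ih hc (by omega)]

lemma count_norm (a b : ℕ) (hb : 1 ≤ b) (hab : b + 1 < a) (ha : a + 1 ≤ μ.card) :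
    Nat.card {T : SYT μ // ¬T.DescentAt a ∧ ¬T.DescentAt b} =
      Nat.card {T : SYT μ // ¬T.DescentAt 3 ∧ ¬T.DescentAt 1} := by
  rw [normb a b hb hab ha, norma a (by omega) ha]

end SYT

lemma YoungDiagram.card_transpose (μ : YoungDiagram) : μ.transpose.card = μ.card := by
  show μ.transpose.cells.card = μ.cells.card
  simp [YoungDiagram.transpose]

namespace SYT

variable {μ : YoungDiagram}

lemma swap_bijOn (μ : YoungDiagram) :
    Set.BijOn Prod.swap (μ.transpose.cells : Set (ℕ × ℕ)) (μ.cells : Set (ℕ × ℕ)) := by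
  refine ⟨?_, Prod.swap_injective.injOn, ?_⟩
  · intro c hc
    simp only [Finset.mem_coe, YoungDiagram.mem_cells] at hc ⊢
    exact (YoungDiagram.mem_transpose).1 hc
  · intro c hc
    simp only [Finset.mem_coe, YoungDiagram.mem_cells] at hc
    refine ⟨c.swap, ?_, Prod.swap_swap c⟩
    simp only [Finset.mem_coe, YoungDiagram.mem_cells, YoungDiagram.mem_transpose,
      Prod.swap_swap]
    exact hc

/-- transposing an SYT -/
noncomputable def trans (T : SYT μ) : SYT μ.transpose where
  entry i j := T.entry j i
  row_strict := fun i j1 j2 h hm =>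
    T.col_strict h (by simpa using (YoungDiagram.mem_transpose).1 hm)
  col_strict := fun i1 i2 j h hm =>
    T.row_strict h (by simpa using (YoungDiagram.mem_transpose).1 hm)
  zeros := fun i j hm => T.zeros (fun h => hm ((YoungDiagram.mem_transpose).2 h))
  bijOn := by
    rw [YoungDiagram.card_transpose]
    exact T.bijOn.comp (swap_bijOn μ)

/-- untransposing -/
noncomputable def trans2 (S : SYT μ.transpose) : SYT μ where
  entry i j := S.entry j i
  row_strict := fun i j1 j2 h hm =>
    S.col_strict h ((YoungDiagram.mem_transpose).2 (by simpa using hm))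
  col_strict := fun i1 i2 j h hm =>
    S.row_strict h ((YoungDiagram.mem_transpose).2 (by simpa using hm))
  zeros := fun i j hm =>
    S.zeros (fun h => hm (by simpa using (YoungDiagram.mem_transpose).1 h))
  bijOn := by
    have h2 : Set.BijOn Prod.swap (μ.cells : Set (ℕ × ℕ))
        (μ.transpose.cells : Set (ℕ × ℕ)) := by
      have := swap_bijOn (μ := μ.transpose)
      rw [YoungDiagram.transpose_transpose] at this
      exact this
    have := S.bijOn.comp h2
    rw [YoungDiagram.card_transpose] at this
    exact this

lemma trans_trans2 (S : SYT μ.transpose) : trans (trans2 S) = S := ext' rfl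

lemma trans2_trans (T : SYT μ) : trans2 (trans T) = T := ext' rfl

lemma trans_pos (T : SYT μ) {v : ℕ} (h : v ∈ Set.Icc 1 μ.card) :
    (trans T).pos v = (T.pos v).swap := by
  refine (trans T).pos_eq ?_ ?_
  · rw [YoungDiagram.mem_transpose, Prod.swap_swap]
    exact T.pos_mem h
  · show T.entry ((T.pos v).swap).2 ((T.pos v).swap).1 = v
    simpa using T.entry_pos h

lemma trans_descent (T : SYT μ) {k : ℕ} (h1 : 1 ≤ k) (h2 : k + 1 ≤ μ.card) :
    (trans T).DescentAt k ↔ ¬ T.DescentAt k := by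
  have h2' : k + 1 ≤ μ.transpose.card := by rw [YoungDiagram.card_transpose]; exact h2
  rw [(trans T).descent_iff h1 h2', T.not_descent_iff h1 h2,
    trans_pos T (mem_of_icc h1 (by omega)), trans_pos T (mem_of_icc (by omega) h2)]
  exact Iff.rfl

lemma trans2_descent (S : SYT μ.transpose) {k : ℕ} (h1 : 1 ≤ k) (h2 : k + 1 ≤ μ.card) :
    (trans2 S).DescentAt k ↔ ¬ S.DescentAt k := by
  have := trans_descent (trans2 S) h1 h2
  rw [trans_trans2] at this
  constructor
  · intro h hS
    exact (this.1 hS) h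
  · intro h
    by_contra h'
    exact h (this.2 h')

/-- transposition gives the bijection between double descents and double non-descents -/
noncomputable def transPairEquiv (a b : ℕ) (ha1 : 1 ≤ a) (ha2 : a + 1 ≤ μ.card)
    (hb1 : 1 ≤ b) (hb2 : b + 1 ≤ μ.card) :
    {T : SYT μ // T.DescentAt a ∧ T.DescentAt b} ≃
      {S : SYT μ.transpose // ¬S.DescentAt a ∧ ¬S.DescentAt b} where
  toFun := fun T => ⟨trans T.1,
    fun h => (trans_descent T.1 ha1 ha2).1 h T.2.1,
    fun h => (trans_descent T.1 hb1 hb2).1 h T.2.2⟩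
  invFun := fun S => ⟨trans2 S.1,
    (trans2_descent S.1 ha1 ha2).2 S.2.1,
    (trans2_descent S.1 hb1 hb2).2 S.2.2⟩
  left_inv := fun T => Subtype.ext (trans2_trans T.1)
  right_inv := fun S => Subtype.ext (trans_trans2 S.1)

end SYT
/-- The number of standard Young tableaux of shape `μ` with descents at `i` and `j`,
for `1 ≤ j < i − 1 < n − 1`, is independent of the choice of `i` and `j`. -/
theorem separated_descent_count_independent (n : ℕ) (μ : YoungDiagram) (hn : μ.card = n)
    (i j i' j' : ℕ) (hj1 : 1 ≤ j) (hj2 : j < i - 1) (hi : i - 1 < n - 1)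
    (hj'1 : 1 ≤ j') (hj'2 : j' < i' - 1) (hi' : i' - 1 < n - 1) :
    Nat.card {T : SYT μ // T.DescentAt i ∧ T.DescentAt j} =
      Nat.card {T : SYT μ // T.DescentAt i' ∧ T.DescentAt j'} := by
  subst hn
  have key : ∀ a b : ℕ, 1 ≤ b → b < a - 1 → a - 1 < μ.card - 1 →
      Nat.card {T : SYT μ // T.DescentAt a ∧ T.DescentAt b} =
        Nat.card {T : SYT μ.transpose // ¬T.DescentAt 3 ∧ ¬T.DescentAt 1} := by
    intro a b hb1 hb2 ha
    have ha3 : 3 ≤ a := by omega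
    have han : a + 1 ≤ μ.card := by omega
    have e1 := Nat.card_congr
      (SYT.transPairEquiv a b (by omega) han hb1 (by omega))
    rw [e1]
    exact SYT.count_norm a b hb1 (by omega)
      (by rw [YoungDiagram.card_transpose]; exact han)
  rw [key i j hj1 hj2 hi, key i' j' hj'1 hj'2 hi']
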